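/- arXiv:1802.10163 — 3 statements merged into one kernel-verified Lean document; each statement's English description precedes it below -/
import Mathlib

section
/- Let G = (V,E) be a directed mixed graph and α, β ∈ V. If there exists a bidirected inducing path from α to β in G, then the DMG G⁺ obtained from G by adding the bidirected edge α↔β satisfies I(G⁺) = I(G). -/
/-!
Directed mixed graphs (DMGs) with μ-separation, following
Mogensen & Hansen, "Markov equivalence of marginalized local independence graphs".
-/

universe u

/-- A directed mixed graph on node set `V`: a set of directed edges (`dir a b`
meaning `a → b`) and a set of bidirected edges (`bi`, a symmetric relation since
bidirected edges are unordered pairs).  Loops are allowed. -/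
structure DMG (V : Type u) where
  dir : V → V → Prop
  bi : V → V → Prop
  bi_symm : ∀ a b, bi a b → bi b a

namespace DMG

variable {V : Type u}

/-- A single step of a walk: an edge instance together with the direction in
which it is traversed (this records, in particular, orientations of loops).
A directed edge has a tail at its source and a head at its target; a bidirected
edge has heads at both endpoints. -/
inductive Step (G : DMG V) : V → V → Type u
  | dirF : ∀ {a b : V}, G.dir a b → Step G a b
  | dirB : ∀ {a b : V}, G.dir b a → Step G a b
  | bid  : ∀ {a b : V}, G.bi a b → Step G a b

/-- Whether the step has a head (edge mark) at its start node. -/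
def Step.headStart {G : DMG V} : ∀ {a b : V}, Step G a b → Bool
  | _, _, .dirF _ => false
  | _, _, .dirB _ => true
  | _, _, .bid _ => true

/-- Whether the step has a head (edge mark) at its end node. -/
def Step.headEnd {G : DMG V} : ∀ {a b : V}, Step G a b → Bool
  | _, _, .dirF _ => true
  | _, _, .dirB _ => false
  | _, _, .bid _ => true

/-- The step traverses a bidirected edge. -/
def Step.IsBid {G : DMG V} {a b : V} : Step G a b → Prop
  | .bid _ => True
  | _ => False

/-- The step traverses a directed edge, forwards. -/
def Step.IsDirF {G : DMG V} {a b : V} : Step G a b → Prop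
  | .dirF _ => True
  | _ => False

/-- The underlying edge of a step: a directed edge is the ordered pair
(tail, head); a bidirected edge is the unordered pair of its endpoints. -/
def Step.edge {G : DMG V} : ∀ {a b : V}, Step G a b → (V × V) ⊕ (Sym2 V)
  | a, b, .dirF _ => Sum.inl (a, b)
  | a, b, .dirB _ => Sum.inl (b, a)
  | a, b, .bid _ => Sum.inr s(a, b)

/-- A walk in a DMG: an alternating sequence of nodes and edges, each edge
between its neighbouring nodes, with a chosen orientation of each edge
(in particular of each directed loop). -/
inductive Walk (G : DMG V) : V → V → Type u
  | nil (a : V) : Walk G a a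
  | cons {a b c : V} (s : Step G a b) (w : Walk G b c) : Walk G a c

namespace Walk

variable {G : DMG V}

/-- A nontrivial walk contains at least one edge. -/
def Nontrivial : ∀ {a b : V}, Walk G a b → Prop
  | _, _, .nil _ => False
  | _, _, .cons _ _ => True

/-- The list of nodes of a walk, in order (with multiplicity). -/
def nodes : ∀ {a b : V}, Walk G a b → List V
  | a, _, .nil _ => [a]
  | a, _, .cons _ w => a :: w.nodes

/-- The non-endpoint (internal) nodes of a walk, in order (with multiplicity). -/
def interior {a b : V} (w : Walk G a b) : List V :=
  (w.nodes.dropLast).drop 1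

/-- The list of edges of a walk. -/
def edges : ∀ {a b : V}, Walk G a b → List ((V × V) ⊕ (Sym2 V))
  | _, _, .nil _ => []
  | _, _, .cons s w => s.edge :: w.edges

/-- Whether the first edge of the walk has a head at the first node
(`false` for a trivial walk). -/
def firstHead : ∀ {a b : V}, Walk G a b → Bool
  | _, _, .nil _ => false
  | _, _, .cons s _ => s.headStart

/-- Whether the last edge of the walk has a head at the last node
(`false` for a trivial walk). -/
def lastHead : ∀ {a b : V}, Walk G a b → Bool
  | _, _, .nil _ => false
  | _, _, .cons s (.nil _) => s.headEnd
  | _, _, .cons _ (.cons t w) => lastHead (Walk.cons t w)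

/-- Helper: conditions at all remaining internal node instances of a walk,
where `h` records whether the edge arriving at the current start node has a
head there.  A node instance is a collider if both adjoining edges have a
head at it; a collider must lie in `Anc`, a noncollider must avoid `C`. -/
def openFrom (C Anc : Set V) : ∀ {a b : V}, Bool → Walk G a b → Prop
  | _, _, _, .nil _ => True
  | a, _, h, .cons s w =>
      (if h && s.headStart then a ∈ Anc else a ∉ C) ∧ openFrom C Anc s.headEnd w

/-- Helper: every remaining internal node instance which is a collider lies in `S`. -/
def collInFrom (S : Set V) : ∀ {a b : V}, Bool → Walk G a b → Prop
  | _, _, _, .nil _ => True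
  | a, _, h, .cons s w =>
      ((h && s.headStart) = true → a ∈ S) ∧ collInFrom S s.headEnd w

/-- Every collider (internal node instance with heads on both sides) of the
walk lies in `S`. -/
def CollidersIn (S : Set V) : ∀ {a b : V}, Walk G a b → Prop
  | _, _, .nil _ => True
  | _, _, .cons s w => collInFrom S s.headEnd w

/-- The walk has no colliders. -/
def NoColliders {a b : V} (w : Walk G a b) : Prop :=
  w.CollidersIn ∅

/-- Helper: every remaining internal node instance is a collider. -/
def allCollFrom : ∀ {a b : V}, Bool → Walk G a b → Prop
  | _, _, _, .nil _ => True
  | _, _, h, .cons s w => (h && s.headStart) = true ∧ allCollFrom s.headEnd w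

/-- Every internal node instance of the walk is a collider (no noncolliders). -/
def AllColliders : ∀ {a b : V}, Walk G a b → Prop
  | _, _, .nil _ => True
  | _, _, .cons s w => allCollFrom s.headEnd w

/-- Every edge of the walk is bidirected. -/
def AllBid : ∀ {a b : V}, Walk G a b → Prop
  | _, _, .nil _ => True
  | _, _, .cons s w => s.IsBid ∧ w.AllBid

/-- The walk consists of a directed first edge (pointing forwards) followed by
bidirected edges only (the form `α → β` or `α → γ₁ ↔ ⋯ ↔ γₙ ↔ β`). -/
def UniForm : ∀ {a b : V}, Walk G a b → Prop
  | _, _, .nil _ => False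
  | _, _, .cons s w => s.IsDirF ∧ w.AllBid

end Walk

/-- `a` is an ancestor of `b`: there is a (possibly trivial) directed path
from `a` to `b`. -/
def anc (G : DMG V) (a b : V) : Prop := Relation.ReflTransGen G.dir a b

/-- The set of ancestors of nodes of `C`. -/
def anSet (G : DMG V) (C : Set V) : Set V := {a | ∃ c ∈ C, G.anc a c}

/-- The walk is μ-connecting given `C`: it is nontrivial, its first node is not
in `C`, every collider lies in `An(C)`, no noncollider lies in `C`, and its
final edge has a head at the final node. -/
def Walk.MuConn {G : DMG V} (C : Set V) : ∀ {a b : V}, Walk G a b → Prop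
  | _, _, .nil _ => False
  | a, _, .cons s w =>
      a ∉ C ∧ Walk.openFrom C (G.anSet C) s.headEnd w ∧ (Walk.cons s w).lastHead = true

/-- `B` is μ-separated from `A` given `C` in `G`: there is no μ-connecting
walk from any node of `A` to any node of `B` given `C`. -/
def muSep (G : DMG V) (A B C : Set V) : Prop :=
  ∀ ⦃a b : V⦄, a ∈ A → b ∈ B → ∀ w : Walk G a b, ¬ w.MuConn C

/-- Two DMGs on the same node set are Markov equivalent: they induce the same
independence model via μ-separation, i.e. `I(G₁) = I(G₂)`. -/
def MarkovEq (G₁ G₂ : DMG V) : Prop :=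
  ∀ A B C : Set V, muSep G₁ A B C ↔ muSep G₂ A B C

/-- `b` is separable from `a` in `I(G)`: there is `C ⊆ V ∖ {a}` with
`⟨{a},{b} | C⟩ ∈ I(G)`. -/
def separable (G : DMG V) (a b : V) : Prop :=
  ∃ C : Set V, a ∉ C ∧ muSep G {a} {b} C

/-- `a ∈ u(b, I(G))`: `b` is inseparable from `a` in `I(G)`. -/
def inU (G : DMG V) (a b : V) : Prop := ¬ G.separable a b

/-- `G₁` is a subgraph of `G₂` (same node set, edge-set inclusion). -/
def Sub (G₁ G₂ : DMG V) : Prop :=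
  (∀ a b, G₁.dir a b → G₂.dir a b) ∧ (∀ a b, G₁.bi a b → G₂.bi a b)

/-- The DMG obtained by adding the directed edge `a → b`. -/
def addDir (G : DMG V) (a b : V) : DMG V where
  dir x y := G.dir x y ∨ (x = a ∧ y = b)
  bi := G.bi
  bi_symm := G.bi_symm

/-- The DMG obtained by adding the bidirected edge `a ↔ b`. -/
def addBi (G : DMG V) (a b : V) : DMG V where
  dir := G.dir
  bi x y := G.bi x y ∨ (x = a ∧ y = b) ∨ (x = b ∧ y = a)
  bi_symm x y h := by
    rcases h with h | h | h
    · exact Or.inl (G.bi_symm _ _ h)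
    · exact Or.inr (Or.inr ⟨h.2, h.1⟩)
    · exact Or.inr (Or.inl ⟨h.2, h.1⟩)

/-- The DMG obtained by removing the directed edge `a → b`. -/
def removeDir (G : DMG V) (a b : V) : DMG V where
  dir x y := G.dir x y ∧ ¬(x = a ∧ y = b)
  bi := G.bi
  bi_symm := G.bi_symm

/-- The DMG obtained by removing the bidirected edge `a ↔ b`. -/
def removeBi (G : DMG V) (a b : V) : DMG V where
  dir := G.dir
  bi x y := G.bi x y ∧ ¬((x = a ∧ y = b) ∨ (x = b ∧ y = a))
  bi_symm x y h := ⟨G.bi_symm _ _ h.1, fun hc => h.2 (by tauto)⟩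

/-- The complete DMG: all directed and all bidirected edges present. -/
def IsComplete (G : DMG V) : Prop :=
  (∀ a b, G.dir a b) ∧ (∀ a b, G.bi a b)

/-- A DMG is maximal if it is complete, or adding any (absent) edge changes the
induced independence model. -/
def IsMaximal (G : DMG V) : Prop :=
  G.IsComplete ∨
    ∀ a b : V, (¬ G.dir a b → ¬ MarkovEq (G.addDir a b) G) ∧
      (¬ G.bi a b → ¬ MarkovEq (G.addBi a b) G)

end DMG
namespace DMG

variable {V : Type u}

/-- An inducing path from `a` to `b`: a nontrivial path or cycle from `a` to
`b` with a head at `b`, with no noncolliders, and on which every node is an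
ancestor of `a` or of `b`. -/
def IsInducingPath (G : DMG V) {a b : V} (w : Walk G a b) : Prop :=
  w.Nontrivial ∧
  (w.nodes.Nodup ∨ (a = b ∧ w.nodes.dropLast.Nodup)) ∧
  w.lastHead = true ∧
  w.AllColliders ∧
  ∀ x ∈ w.nodes, G.anc x a ∨ G.anc x b

/-- A bidirected inducing path: an inducing path all of whose edges are bidirected. -/
def IsBidirectedIP (G : DMG V) {a b : V} (w : Walk G a b) : Prop :=
  G.IsInducingPath w ∧ w.AllBid

/-- A directed inducing path: an inducing path of the form `α → β` or
`α → γ₁ ↔ ⋯ ↔ γₙ ↔ β` with every `γᵢ` an ancestor of `β`. -/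
def IsDirectedIP (G : DMG V) {a b : V} (w : Walk G a b) : Prop :=
  G.IsInducingPath w ∧ w.UniForm ∧ ∀ x ∈ w.interior, G.anc x b

/-- There exists a nontrivial walk in `G` between `x` and `y` with no
colliders, all non-endpoint nodes in `M`, and with edge marks `hs` at `x`
(`true` = head) and `he` at `y`. -/
def ConnThrough (G : DMG V) (M : Set V) (x y : V) (hs he : Bool) : Prop :=
  ∃ w : Walk G x y, w.Nontrivial ∧ w.NoColliders ∧
    (∀ z ∈ w.interior, z ∈ M) ∧ w.firstHead = hs ∧ w.lastHead = he

/-- The latent projection `m(G, O)` of `G` on `O`: the DMG on node set `O`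
having an edge (with given endpoint marks) between `α` and `β` if and only if
`G` contains a nontrivial endpoint-identical walk between `α` and `β` with no
colliders and all non-endpoint nodes in `M = V ∖ O`. -/
def latentProj (G : DMG V) (O : Set V) : DMG {x : V // x ∈ O} where
  dir x y := ConnThrough G Oᶜ x.1 y.1 false true
  bi x y := ConnThrough G Oᶜ x.1 y.1 true true ∨ ConnThrough G Oᶜ y.1 x.1 true true
  bi_symm x y h := h.symm

/-- `x` is directedly collider-connected to `b`: there is a nontrivial walk
from `x` to `b` with a head at `b` on which every non-endpoint node is a
collider. -/
def dirCollConn (G : DMG V) (x b : V) : Prop :=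
  ∃ w : Walk G x b, w.Nontrivial ∧ w.AllColliders ∧ w.lastHead = true

/-- The set `D(a,b)` of nodes in `An({a,b})` directedly collider-connected to
`b`, except `a`. -/
def Dset (G : DMG V) (a b : V) : Set V :=
  {x | x ∈ G.anSet {a, b} ∧ G.dirCollConn x b} \ {a}

/-- `a` and `b` are potential siblings in the independence model `I(G)`. -/
def PotSib (G : DMG V) (a b : V) : Prop :=
  (G.inU b a ∧ G.inU a b) ∧
  (∀ (γ : V) (C : Set V), b ∈ C → muSep G {γ} {a} C → muSep G {γ} {b} C) ∧
  (∀ (γ : V) (C : Set V), a ∈ C → muSep G {γ} {b} C → muSep G {γ} {a} C)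

/-- `a` is a potential parent of `b` in the independence model `I(G)`. -/
def PotPar (G : DMG V) (a b : V) : Prop :=
  G.inU a b ∧
  (∀ (γ : V) (C : Set V), a ∉ C → muSep G {γ} {b} C → muSep G {γ} {a} C) ∧
  (∀ (γ δ : V) (C : Set V), a ∉ C → b ∈ C →
    muSep G {γ} {δ} C → muSep G {γ} {b} C ∨ muSep G {a} {δ} C) ∧
  (∀ (γ : V) (C : Set V), a ∉ C → muSep G {b} {γ} C → muSep G {b} {γ} (C ∪ {a}))

/-- The graph `N(I(G))`: directed edge `a → b` present iff `a` is a potential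
parent of `b` in `I(G)`, bidirected edge `a ↔ b` present iff `a` and `b` are
potential siblings in `I(G)` (potential siblinghood is symmetric). -/
def NGraph (G : DMG V) : DMG V where
  dir a b := G.PotPar a b
  bi a b := G.PotSib a b ∨ G.PotSib b a
  bi_symm _ _ h := h.symm

/-- A path is m-connecting given `C` if it is a path (no repeated nodes), no
noncollider on it is in `C` and every collider on it is in `An(C)`. -/
def Walk.MConn {G : DMG V} (C : Set V) : ∀ {a b : V}, Walk G a b → Prop
  | _, _, .nil _ => True
  | _, _, .cons s w =>
      (Walk.cons s w).nodes.Nodup ∧ Walk.openFrom C (G.anSet C) s.headEnd w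

/-- `A` and `B` are m-separated by `C`: there is no m-connecting path between
a node of `A` and a node of `B` given `C`. -/
def mSep (G : DMG V) (A B C : Set V) : Prop :=
  ∀ ⦃a b : V⦄, a ∈ A → b ∈ B →
    (∀ w : Walk G a b, ¬ w.MConn C) ∧ (∀ w : Walk G b a, ¬ w.MConn C)

/-- Auxiliary directed-edge relation of the `B`-history version of `G`. -/
def histDir (G : DMG V) (B : Set V) : (V ⊕ {x : V // x ∈ B}) → (V ⊕ {x : V // x ∈ B}) → Prop
  | .inl u, .inl v => G.dir u v
  | .inl u, .inr v => G.dir u v.1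
  | _, _ => False

/-- Auxiliary bidirected-edge relation of the `B`-history version of `G`. -/
def histBi (G : DMG V) (B : Set V) : (V ⊕ {x : V // x ∈ B}) → (V ⊕ {x : V // x ∈ B}) → Prop
  | .inl u, .inl v => G.bi u v
  | .inl u, .inr v => G.bi u v.1
  | .inr u, .inl v => G.bi u.1 v
  | .inr _, .inr _ => False

/-- The `B`-history version `G(B)` of `G`: node set `V ⊔ Bᵖ`, whose subgraph
on `V` is `G`, with additionally `α ↔ βᵖ` whenever `α ↔ β` in `G` and
`α → βᵖ` whenever `α → β` in `G` (for `α ∈ V`, `β ∈ B`). -/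
def hist (G : DMG V) (B : Set V) : DMG (V ⊕ {x : V // x ∈ B}) where
  dir := G.histDir B
  bi := G.histBi B
  bi_symm x y h := by
    cases x <;> cases y <;>
      simp only [histBi] at h ⊢ <;>
      first
        | exact G.bi_symm _ _ h
        | exact h

end DMG

/-!
An occurrence of `a ↔ b` on a μ-connecting walk of `G⁺` has heads at both of its ends, so it can
be replaced by any walk of `G` from `a` to `b` with heads at both ends whose internal nodes satisfy
the μ-connection conditions given `C`. Such a walk is found along the bidirected inducing path
`a ↔ γ₁ ↔ ⋯ ↔ γₙ ↔ b`: each `γᵢ ∈ An(C)` is kept as a collider. A `γᵢ ∉ An(C)` has no descendant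
in `C`; if it is an ancestor of `b` the walk leaves along a directed path `γᵢ → ⋯ → b`, and
otherwise `γᵢ` is an ancestor of `a` and the walk is restarted as `a ← ⋯ ← γᵢ`.
-/

namespace DMG

variable {V : Type u} {G H : DMG V}

theorem anSet_mono (hGH : G.Sub H) (C : Set V) : G.anSet C ⊆ H.anSet C :=
  fun _ ⟨c, hc, hxc⟩ => ⟨c, hc, Relation.ReflTransGen.mono hGH.1 _ _ hxc⟩

theorem not_mem_of_not_mem_anSet {C : Set V} {x : V} (hx : x ∉ G.anSet C) : x ∉ C :=
  fun hxC => hx ⟨x, hxC, .refl⟩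

theorem not_mem_anSet_of_anc {C : Set V} {x z : V} (hx : x ∉ G.anSet C) (hxz : G.anc x z) :
    z ∉ G.anSet C :=
  fun ⟨c, hc, hzc⟩ => hx ⟨c, hc, hxz.trans hzc⟩

theorem sub_addBi (G : DMG V) (a b : V) : G.Sub (G.addBi a b) :=
  ⟨fun _ _ h => h, fun _ _ h => Or.inl h⟩

def Step.reverse : ∀ {x y : V}, Step G x y → Step G y x
  | _, _, .dirF e => .dirB e
  | _, _, .dirB e => .dirF e
  | _, _, .bid e => .bid (G.bi_symm _ _ e)

namespace Walk

def append : ∀ {x y z : V}, Walk G x y → Walk G y z → Walk G x z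
  | _, _, _, .nil _, q => q
  | _, _, _, .cons s w, q => .cons s (w.append q)

def reverse : ∀ {x y : V}, Walk G x y → Walk G y x
  | _, _, .nil x => .nil x
  | _, _, .cons s w => w.reverse.append (.cons s.reverse (.nil _))

def lastHeadD : ∀ {x y : V}, Walk G x y → Bool → Bool
  | _, _, .nil _, h => h
  | _, _, .cons s w, _ => w.lastHeadD s.headEnd

theorem lastHead_eq_lastHeadD : ∀ {x y : V} (w : Walk G x y), w.lastHead = w.lastHeadD false
  | _, _, .nil _ => rfl
  | _, _, .cons _ (.nil _) => rfl
  | _, _, .cons _ (.cons t w) => lastHead_eq_lastHeadD (.cons t w)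

theorem lastHeadD_append : ∀ {x y z : V} (P : Walk G x y) (Q : Walk G y z) (h : Bool),
    (P.append Q).lastHeadD h = Q.lastHeadD (P.lastHeadD h)
  | _, _, _, .nil _, _, _ => rfl
  | _, _, _, .cons s w, Q, _ => lastHeadD_append w Q s.headEnd

theorem nontrivial_append_right : ∀ {x y z : V} (P : Walk G x y) {Q : Walk G y z},
    Q.Nontrivial → (P.append Q).Nontrivial
  | _, _, _, .nil _, _, hQ => hQ
  | _, _, _, .cons _ _, _, _ => trivial

theorem nodes_append : ∀ {x y z : V} (P : Walk G x y) (Q : Walk G y z),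
    (P.append Q).nodes = P.nodes ++ Q.nodes.tail
  | _, _, _, .nil _, .nil _ => rfl
  | _, _, _, .nil _, .cons _ _ => rfl
  | _, _, _, .cons _ w, Q => congrArg _ (nodes_append w Q)

theorem allBid_append : ∀ {x y z : V} {P : Walk G x y} {Q : Walk G y z},
    P.AllBid → Q.AllBid → (P.append Q).AllBid
  | _, _, _, .nil _, _, _, hQ => hQ
  | _, _, _, .cons _ _, _, hP, hQ => ⟨hP.1, allBid_append hP.2 hQ⟩

theorem openFrom_append {C A : Set V} : ∀ {x y z : V} (P : Walk G x y) (Q : Walk G y z)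
    (h : Bool), (P.append Q).openFrom C A h ↔ P.openFrom C A h ∧ Q.openFrom C A (P.lastHeadD h)
  | _, _, _, .nil _, _, _ => ⟨fun hQ => ⟨trivial, hQ⟩, And.right⟩
  | _, _, _, .cons s w, Q, _ => by
      simp only [append, openFrom, lastHeadD, openFrom_append w Q, and_assoc]

theorem nontrivial_reverse : ∀ {x y : V} {w : Walk G x y}, w.Nontrivial → w.reverse.Nontrivial
  | _, _, .cons _ w, _ => nontrivial_append_right w.reverse trivial

theorem nodes_reverse : ∀ {x y : V} (w : Walk G x y), w.reverse.nodes = w.nodes.reverse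
  | _, _, .nil _ => rfl
  | _, _, .cons _ w => by simp [reverse, nodes, nodes_append, nodes_reverse w]

theorem allBid_reverse : ∀ {x y : V} {w : Walk G x y}, w.AllBid → w.reverse.AllBid
  | _, _, .nil _, _ => trivial
  | _, _, .cons (.bid _) _, hw => allBid_append (allBid_reverse hw.2) ⟨trivial, trivial⟩

theorem muConn_iff {C : Set V} {x y : V} (w : Walk G x y) :
    w.MuConn C ↔ w.Nontrivial ∧ w.openFrom C (G.anSet C) false ∧ w.lastHeadD false = true := by
  cases w with
  | nil => exact ⟨False.elim, fun h => h.1.elim⟩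
  | cons s w =>
    rw [← lastHead_eq_lastHeadD]
    simp only [MuConn, Nontrivial, openFrom, Bool.false_and, Bool.false_eq_true, if_false,
      true_and, and_assoc]

/-- `w` can stand in for an edge with end marks `hs`, `he` on a walk that is μ-connecting
given `C`. -/
def ActsAsEdge (C : Set V) (hs he : Bool) : ∀ {x y : V}, Walk G x y → Prop
  | _, _, .nil _ => False
  | _, _, .cons s w =>
      s.headStart = hs ∧ w.lastHeadD s.headEnd = he ∧ w.openFrom C (G.anSet C) s.headEnd

variable {C : Set V}

theorem ActsAsEdge.single {x y : V} (s : Step G x y) :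
    (Walk.cons s (.nil y)).ActsAsEdge C s.headStart s.headEnd :=
  ⟨rfl, rfl, trivial⟩

theorem ActsAsEdge.append {x y z : V} {hs h₁ h₂ he : Bool} {P : Walk G x y} {Q : Walk G y z}
    (hP : P.ActsAsEdge C hs h₁) (hQ : Q.ActsAsEdge C h₂ he)
    (hy : if h₁ && h₂ then y ∈ G.anSet C else y ∉ C) : (P.append Q).ActsAsEdge C hs he := by
  cases P with
  | nil => exact hP.elim
  | cons s P₀ =>
  cases Q with
  | nil => exact hQ.elim
  | cons t Q₀ =>
  obtain ⟨rfl, rfl, hP₀⟩ := hP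
  obtain ⟨rfl, rfl, hQ₀⟩ := hQ
  exact ⟨rfl, lastHeadD_append _ _ _, (openFrom_append _ _ _).2 ⟨hP₀, hy, hQ₀⟩⟩

theorem exists_substitution (hanc : H.anSet C ⊆ G.anSet C)
    (hstep : ∀ {x y : V} (s : Step H x y), ∃ r : Walk G x y, r.ActsAsEdge C s.headStart s.headEnd) :
    ∀ {x y : V} (ω : Walk H x y), ∃ ω' : Walk G x y, (ω.Nontrivial → ω'.Nontrivial) ∧
      (∀ h, ω'.lastHeadD h = ω.lastHeadD h) ∧
      ∀ h, ω.openFrom C (H.anSet C) h → ω'.openFrom C (G.anSet C) h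
  | _, _, .nil x => ⟨.nil x, id, fun _ => rfl, fun _ _ => trivial⟩
  | x, _, .cons s w => by
    obtain ⟨w', -, hlast, hopen⟩ := exists_substitution hanc hstep w
    obtain ⟨r, hr⟩ := hstep s
    cases r with
    | nil => exact hr.elim
    | cons t r₀ =>
    obtain ⟨hstart, hend, hr₀⟩ := hr
    refine ⟨.cons t (r₀.append w'), fun _ => trivial, fun _ => ?_, fun h ⟨hx, hw⟩ => ?_⟩
    · simp only [lastHeadD, lastHeadD_append, hend, hlast]
    · refine ⟨?_, (openFrom_append _ _ _).2 ⟨hr₀, hend ▸ hopen _ hw⟩⟩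
      rw [hstart]
      by_cases hc : (h && s.headStart) = true <;> simp only [hc, if_true] at hx ⊢
      exacts [hanc hx, hx]

theorem exists_actsAsEdge_of_transGen {x y : V} (hxy : Relation.TransGen G.dir x y)
    (hx : x ∉ G.anSet C) : ∃ w : Walk G x y, w.ActsAsEdge C false true := by
  induction hxy using Relation.TransGen.head_induction_on with
  | single e => exact ⟨_, .single (.dirF e)⟩
  | head e _ ih =>
    have hz := not_mem_anSet_of_anc hx (.single e)
    obtain ⟨w, hw⟩ := ih hz
    exact ⟨_, (ActsAsEdge.single (.dirF e)).append hw (not_mem_of_not_mem_anSet hz)⟩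

theorem exists_actsAsEdge_of_transGen_symm {x y : V} (hxy : Relation.TransGen G.dir x y)
    (hx : x ∉ G.anSet C) : ∃ w : Walk G y x, w.ActsAsEdge C true false := by
  induction hxy with
  | single e => exact ⟨_, .single (.dirB e)⟩
  | tail hxz e ih =>
    obtain ⟨w, hw⟩ := ih
    have hz := not_mem_anSet_of_anc hx hxz.to_reflTransGen
    exact ⟨_, (ActsAsEdge.single (.dirB e)).append hw (not_mem_of_not_mem_anSet hz)⟩

theorem exists_actsAsEdge_of_allBid_of_prefix {a b m : V} (q : Walk G m b) (hq : q.AllBid)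
    (hanc : ∀ x ∈ q.nodes, G.anc x a ∨ G.anc x b) (Q : Walk G a m)
    (hQ : Q.ActsAsEdge C true true) : ∃ W : Walk G a b, W.ActsAsEdge C true true := by
  induction q with
  | nil => exact ⟨Q, hQ⟩
  | @cons m m' b s q ih =>
    cases s with
    | dirF _ => exact hq.1.elim
    | dirB _ => exact hq.1.elim
    | bid e =>
    have hanc' := fun x hx => hanc x (List.mem_cons_of_mem m hx)
    by_cases hmC : m ∈ G.anSet C
    · exact ih hq.2 hanc' _ (hQ.append (.single (.bid e)) hmC)
    by_cases hmb : G.anc m b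
    · rcases Relation.reflTransGen_iff_eq_or_transGen.1 hmb with rfl | hmb
      · exact ⟨Q, hQ⟩
      · obtain ⟨D, hD⟩ := exists_actsAsEdge_of_transGen hmb hmC
        exact ⟨_, hQ.append hD (not_mem_of_not_mem_anSet hmC)⟩
    have hma : G.anc m a := (hanc m List.mem_cons_self).resolve_right hmb
    have hrestart : ∃ Q' : Walk G a m', Q'.ActsAsEdge C true true := by
      rcases Relation.reflTransGen_iff_eq_or_transGen.1 hma with rfl | hma
      · exact ⟨_, .single (.bid e)⟩
      · obtain ⟨R, hR⟩ := exists_actsAsEdge_of_transGen_symm hma hmC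
        exact ⟨_, hR.append (.single (.bid e)) (not_mem_of_not_mem_anSet hmC)⟩
    obtain ⟨Q', hQ'⟩ := hrestart
    exact ih hq.2 hanc' Q' hQ'

theorem exists_actsAsEdge_of_allBid {a b : V} (w : Walk G a b) (hnt : w.Nontrivial)
    (hw : w.AllBid) (hanc : ∀ x ∈ w.nodes, G.anc x a ∨ G.anc x b) :
    ∃ W : Walk G a b, W.ActsAsEdge C true true := by
  cases w with
  | nil => exact hnt.elim
  | cons s q =>
    cases s with
    | bid e =>
      exact exists_actsAsEdge_of_allBid_of_prefix q hw.2
        (fun x hx => hanc x (List.mem_cons_of_mem a hx)) _ (.single (.bid e))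
    | _ => exact hw.1.elim

end Walk

open Walk

theorem muSep_of_substitute {A B C : Set V} (hanc : H.anSet C ⊆ G.anSet C)
    (hstep : ∀ {x y : V} (s : Step H x y), ∃ r : Walk G x y, r.ActsAsEdge C s.headStart s.headEnd)
    (hsep : G.muSep A B C) : H.muSep A B C := by
  intro x y hx hy ω hω
  obtain ⟨hnt, hopen, hlast⟩ := (muConn_iff ω).1 hω
  obtain ⟨ω', hnt', hlast', hopen'⟩ := exists_substitution hanc hstep ω
  exact hsep hx hy ω' ((muConn_iff ω').2 ⟨hnt' hnt, hopen' _ hopen, hlast' _ ▸ hlast⟩)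

theorem Sub.muSep {A B C : Set V} (hGH : G.Sub H) (hsep : H.muSep A B C) : G.muSep A B C :=
  muSep_of_substitute (anSet_mono hGH C) (fun s => by
    cases s with
    | dirF e => exact ⟨_, .single (.dirF (hGH.1 _ _ e))⟩
    | dirB e => exact ⟨_, .single (.dirB (hGH.1 _ _ e))⟩
    | bid e => exact ⟨_, .single (.bid (hGH.2 _ _ e))⟩) hsep

theorem markovEq_addBi {a b : V}
    (hab : ∀ C, ∃ W : Walk G a b, W.ActsAsEdge C true true)
    (hba : ∀ C, ∃ W : Walk G b a, W.ActsAsEdge C true true) : MarkovEq (G.addBi a b) G := by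
  refine fun A B C => ⟨(G.sub_addBi a b).muSep, muSep_of_substitute (fun _ hx => hx) fun s => ?_⟩
  rcases s with e | e | (e | ⟨rfl, rfl⟩ | ⟨rfl, rfl⟩)
  · exact ⟨_, ActsAsEdge.single (G := G) (.dirF e)⟩
  · exact ⟨_, ActsAsEdge.single (G := G) (.dirB e)⟩
  · exact ⟨_, ActsAsEdge.single (G := G) (.bid e)⟩
  · exact hab C
  · exact hba C

end DMG

theorem stmt9_general {V : Type u} (G : DMG V) (a b : V)
    (h : ∃ w : DMG.Walk G a b, G.IsBidirectedIP w) :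
    DMG.MarkovEq (G.addBi a b) G := by
  obtain ⟨w, ⟨hnt, -, -, -, hanc⟩, hw⟩ := h
  refine DMG.markovEq_addBi (fun _ => w.exists_actsAsEdge_of_allBid hnt hw hanc) fun _ =>
    w.reverse.exists_actsAsEdge_of_allBid (DMG.Walk.nontrivial_reverse hnt)
      (DMG.Walk.allBid_reverse hw) fun x hx => (hanc x ?_).symm
  simpa [DMG.Walk.nodes_reverse] using hx

/-- Proposition 8: if there is a bidirected inducing path
from `a` to `b` in `G`, then adding the bidirected edge `a ↔ b` does not
change the independence model: `I(G⁺) = I(G)`. -/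
theorem stmt9 {V : Type u} [Fintype V] (G : DMG V) (a b : V)
    (h : ∃ w : DMG.Walk G a b, G.IsBidirectedIP w) :
    DMG.MarkovEq (G.addBi a b) G :=
  stmt9_general G a b h
end

section
/- Let G = (V,E) be a directed mixed graph and α, β ∈ V. If there is no inducing path from α to β in G, then β is μ-separated from α given D(α,β) in G, where D(α,β) = {γ ∈ An({α,β}) : γ is directedly collider-connected to β} ∖ {α}. -/
/-!
Directed mixed graphs (DMGs) with μ-separation, following
Mogensen & Hansen, "Markov equivalence of marginalized local independence graphs".
-/

universe u

/-!
A μ-connecting walk from `α` to `β` given `D = D(α,β)` ends with a stretch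
`γ ∗→ γ₁ ↔ ⋯ ↔ γₙ ↔ β` of colliders preceded by its last noncollider `γ` (or `γ = α`
if there is none). Every node of the walk lies in `An({α,β})`: colliders lie in
`An(D) ⊆ An({α,β})`, and from a noncollider one follows tails towards a collider or an
endpoint. So if `γ ≠ α`, then `γ ∈ D`, contradicting that noncolliders avoid `D`. Hence
`γ = α`, and short-cutting the bidirected stretch to a path turns the walk
`α ∗→ γ₁ ↔ ⋯ ↔ β` into an inducing path from `α` to `β`.
-/

namespace DMG

variable {V : Type u} {G : DMG V}

def IsAncestral (G : DMG V) (T : Set V) : Prop :=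
  ∀ ⦃p q : V⦄, G.dir p q → q ∈ T → p ∈ T

lemma isAncestral_anSet (S : Set V) : G.IsAncestral (G.anSet S) := by
  rintro p q hpq ⟨c, hc, hqc⟩
  exact ⟨c, hc, .head hpq hqc⟩

lemma subset_anSet (S : Set V) : S ⊆ G.anSet S :=
  fun c hc => ⟨c, hc, .refl⟩

lemma anSet_subset_of_subset {C S : Set V} (h : C ⊆ G.anSet S) : G.anSet C ⊆ G.anSet S := by
  rintro x ⟨c, hc, hxc⟩
  obtain ⟨d, hd, hcd⟩ := h hc
  exact ⟨d, hd, hxc.trans hcd⟩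

lemma mem_anSet_pair {a b x : V} : x ∈ G.anSet {a, b} ↔ G.anc x a ∨ G.anc x b := by
  simp [anSet]

namespace Walk

variable {x y : V}

/-- Walks of the shape `x ∗→ γ₁ ↔ ⋯ ↔ γₙ ↔ y`: exactly the nontrivial walks whose
non-endpoint nodes are all colliders and which have a head at `y`. -/
def IsDirCollWalk : ∀ {x y : V}, Walk G x y → Prop
  | _, _, .nil _ => False
  | _, _, .cons s w => s.headEnd = true ∧ w.AllBid

lemma start_mem_nodes (w : Walk G x y) : x ∈ w.nodes := by
  cases w <;> simp [nodes]

lemma dropLast_nodes_cons {z : V} (s : Step G x y) (w : Walk G y z) :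
    (Walk.cons s w).nodes.dropLast = x :: w.nodes.dropLast := by
  cases w <;> simp [nodes]

lemma nodes_eq_dropLast_append : ∀ {x y : V} (w : Walk G x y), w.nodes = w.nodes.dropLast ++ [y]
  | _, _, .nil _ => rfl
  | _, _, .cons s w => by
      rw [dropLast_nodes_cons, List.cons_append, ← nodes_eq_dropLast_append w]
      rfl

lemma AllBid.allCollFrom_true {w : Walk G x y} (hw : w.AllBid) : allCollFrom true w := by
  induction w with
  | nil => trivial
  | cons t w ih =>
    obtain ⟨ht, hw⟩ := hw
    cases t with
    | bid => exact ⟨rfl, ih hw⟩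
    | _ => simp [Step.IsBid] at ht

lemma AllBid.lastHead {w : Walk G x y} (hw : w.AllBid) (hnt : w.Nontrivial) :
    w.lastHead = true := by
  induction w with
  | nil => exact hnt.elim
  | cons t w ih =>
    obtain ⟨ht, hw⟩ := hw
    cases w with
    | nil =>
      cases t with
      | bid => rfl
      | _ => simp [Step.IsBid] at ht
    | cons => exact ih hw trivial

lemma AllBid.isDirCollWalk {w : Walk G x y} (hw : w.AllBid) (hxy : x ≠ y) : w.IsDirCollWalk := by
  cases w with
  | nil => exact absurd rfl hxy
  | cons t w =>
    obtain ⟨ht, hw⟩ := hw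
    cases t with
    | bid => exact ⟨rfl, hw⟩
    | _ => simp [Step.IsBid] at ht

lemma AllBid.exists_suffix {w : Walk G x y} (hw : w.AllBid) {z : V} (hz : z ∈ w.nodes) :
    ∃ q : Walk G z y, q.AllBid ∧ q.nodes <:+ w.nodes := by
  induction w with
  | nil =>
    obtain rfl : z = _ := by simpa [nodes] using hz
    exact ⟨.nil z, trivial, List.suffix_refl _⟩
  | cons t w ih =>
    rcases List.mem_cons.1 hz with rfl | hz
    · exact ⟨.cons t w, hw, List.suffix_refl _⟩
    · obtain ⟨q, hq, hqw⟩ := ih hw.2 hz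
      exact ⟨q, hq, hqw.trans (List.suffix_cons _ _)⟩

lemma AllBid.exists_nodup {w : Walk G x y} (hw : w.AllBid) :
    ∃ p : Walk G x y, p.AllBid ∧ p.nodes.Nodup ∧ p.nodes.Sublist w.nodes := by
  induction w with
  | nil x => exact ⟨.nil x, trivial, by simp [nodes], List.Sublist.refl _⟩
  | @cons x _ _ t w ih =>
    obtain ⟨p, hp, hpnd, hpw⟩ := ih hw.2
    by_cases hx : x ∈ p.nodes
    · obtain ⟨q, hq, hqp⟩ := hp.exists_suffix hx
      exact ⟨q, hq, hpnd.sublist hqp.sublist, (hqp.sublist.trans hpw).cons x⟩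
    · exact ⟨.cons t p, ⟨hw.1, hp⟩, List.nodup_cons.2 ⟨hx, hpnd⟩, hpw.cons_cons x⟩

lemma IsDirCollWalk.nontrivial {w : Walk G x y} (hw : w.IsDirCollWalk) : w.Nontrivial := by
  cases w with
  | nil => exact hw.elim
  | cons => trivial

lemma IsDirCollWalk.allColliders {w : Walk G x y} (hw : w.IsDirCollWalk) : w.AllColliders := by
  cases w with
  | nil => exact hw.elim
  | cons s w =>
    obtain ⟨hs, hw⟩ := hw
    show allCollFrom s.headEnd w
    rw [hs]
    exact hw.allCollFrom_true

lemma IsDirCollWalk.lastHead {w : Walk G x y} (hw : w.IsDirCollWalk) : w.lastHead = true := by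
  cases w with
  | nil => exact hw.elim
  | cons s w =>
    obtain ⟨hs, hw⟩ := hw
    cases w with
    | nil => exact hs
    | cons => exact hw.lastHead trivial

lemma IsDirCollWalk.exists_path_or_cycle {w : Walk G x y} (hw : w.IsDirCollWalk) :
    ∃ p : Walk G x y, p.IsDirCollWalk ∧
      (p.nodes.Nodup ∨ (x = y ∧ p.nodes.dropLast.Nodup)) ∧ p.nodes.Sublist w.nodes := by
  cases w with
  | nil => exact hw.elim
  | cons s w =>
    obtain ⟨hs, hw⟩ := hw
    obtain ⟨p, hp, hpnd, hpw⟩ := hw.exists_nodup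
    have hsub : (Walk.cons s p).nodes.Sublist (Walk.cons s w).nodes := hpw.cons_cons x
    by_cases hx : x ∈ p.nodes
    · by_cases hxy : x = y
      · subst hxy
        have hxp : x ∉ p.nodes.dropLast := by
          rw [nodes_eq_dropLast_append p, List.nodup_append] at hpnd
          exact fun hmem => hpnd.2.2 x hmem x (List.mem_singleton_self x) rfl
        refine ⟨.cons s p, ⟨hs, hp⟩, Or.inr ⟨rfl, ?_⟩, hsub⟩
        rw [dropLast_nodes_cons]
        exact List.nodup_cons.2 ⟨hxp, hpnd.sublist (List.dropLast_sublist _)⟩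
      · obtain ⟨q, hq, hqp⟩ := hp.exists_suffix hx
        exact ⟨q, hq.isDirCollWalk hxy, Or.inl (hpnd.sublist hqp.sublist),
          (hqp.sublist.trans hpw).cons x⟩
    · exact ⟨.cons s p, ⟨hs, hp⟩, Or.inl (List.nodup_cons.2 ⟨hx, hpnd⟩), hsub⟩

lemma nodes_subset_of_openFrom {C A T : Set V} (hT : G.IsAncestral T) (hA : A ⊆ T) :
    ∀ {x y : V} (w : Walk G x y) (h : Bool), openFrom C A h w → (h = false → x ∈ T) → y ∈ T →
      ∀ z ∈ w.nodes, z ∈ T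
  | _, _, .nil _, _, _, _, hy => by simpa [nodes] using hy
  | x, _, .cons t w, h, ho, hxT, hy => by
      have hx_of_headStart : t.headStart = true → x ∈ T := by
        intro ht
        cases h
        · exact hxT rfl
        · exact hA (by simpa [ht] using ho.1)
      have hw : ∀ z ∈ w.nodes, z ∈ T := by
        refine nodes_subset_of_openFrom hT hA w _ ho.2 ?_ hy
        cases t with
        | dirB e => exact fun _ => hT e (hx_of_headStart rfl)
        | _ => simp [Step.headEnd]
      have hx : x ∈ T := by
        cases t with
        | dirF e => exact hT e (hw _ (start_mem_nodes w))
        | _ => exact hx_of_headStart rfl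
      intro z hz
      rcases List.mem_cons.1 hz with rfl | hz
      exacts [hx, hw z hz]

lemma exists_dirCollWalk_of_openFrom (C A : Set V) :
    ∀ {x y : V} (w : Walk G x y) (h : Bool), openFrom C A h w → w.lastHead = true →
      (∃ γ ∈ w.nodes, γ ∉ C ∧ ∃ u : Walk G γ y, u.IsDirCollWalk ∧ u.nodes ⊆ w.nodes) ∨
        (h = true ∧ w.AllBid)
  | _, _, .nil _, _, _, hl => by simp [lastHead] at hl
  | x, y, .cons t w, h, ho, hl => by
      have hw : (∃ γ ∈ w.nodes, γ ∉ C ∧ ∃ u : Walk G γ y, u.IsDirCollWalk ∧ u.nodes ⊆ w.nodes) ∨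
          (t.headEnd = true ∧ w.AllBid) := by
        cases w with
        | nil => exact Or.inr ⟨hl, trivial⟩
        | cons => exact exists_dirCollWalk_of_openFrom C A _ _ ho.2 hl
      rcases hw with ⟨γ, hγ, hγC, u, hu, huw⟩ | ⟨hte, hw⟩
      · exact Or.inl ⟨γ, List.mem_cons_of_mem _ hγ, hγC, u, hu,
          List.Subset.trans huw (List.subset_cons_self _ _)⟩
      · have hxC : h = false ∨ t.headStart = false → x ∉ C := by
          rintro (rfl | ht)
          · simpa using ho.1
          · simpa [ht] using ho.1
        cases t with
        | dirF e =>
          exact Or.inl ⟨x, start_mem_nodes _, hxC (Or.inr rfl), .cons (.dirF e) w, ⟨hte, hw⟩,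
            List.Subset.refl _⟩
        | dirB e => simp [Step.headEnd] at hte
        | bid e =>
          cases h
          · exact Or.inl ⟨x, start_mem_nodes _, hxC (Or.inl rfl), .cons (.bid e) w, ⟨hte, hw⟩,
              List.Subset.refl _⟩
          · exact Or.inr ⟨rfl, trivial, hw⟩

lemma MuConn.openFrom_false {C : Set V} {w : Walk G x y} (hw : w.MuConn C) :
    openFrom C (G.anSet C) false w ∧ w.lastHead = true := by
  cases w with
  | nil => exact hw.elim
  | cons s w => exact ⟨⟨by simpa using hw.1, hw.2.1⟩, hw.2.2⟩

lemma MuConn.nodes_subset {C T : Set V} {w : Walk G x y} (hw : w.MuConn C)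
    (hT : G.IsAncestral T) (hCT : G.anSet C ⊆ T) (hx : x ∈ T) (hy : y ∈ T) :
    ∀ z ∈ w.nodes, z ∈ T :=
  nodes_subset_of_openFrom hT hCT w false hw.openFrom_false.1 (fun _ => hx) hy

lemma MuConn.exists_dirCollWalk {C : Set V} {w : Walk G x y} (hw : w.MuConn C) :
    ∃ γ ∈ w.nodes, γ ∉ C ∧ ∃ u : Walk G γ y, u.IsDirCollWalk ∧ u.nodes ⊆ w.nodes := by
  obtain ⟨ho, hl⟩ := hw.openFrom_false
  simpa using exists_dirCollWalk_of_openFrom C _ w false ho hl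

end Walk

end DMG

theorem stmt11_general {V : Type u} (G : DMG V) (a b : V)
    (h : ¬ ∃ w : DMG.Walk G a b, G.IsInducingPath w) :
    DMG.muSep G {a} {b} (G.Dset a b) := by
  intro x y hx hy w hw
  subst x y
  have hDT : G.Dset a b ⊆ G.anSet {a, b} := fun _ hγ => hγ.1.1
  have hwT := hw.nodes_subset (DMG.isAncestral_anSet _) (DMG.anSet_subset_of_subset hDT)
    (DMG.subset_anSet _ (by simp)) (DMG.subset_anSet _ (by simp))
  obtain ⟨γ, hγw, hγD, u, hu, huw⟩ := hw.exists_dirCollWalk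
  obtain rfl : γ = a := by
    by_contra hγa
    exact hγD ⟨⟨hwT γ hγw, u, hu.nontrivial, hu.allColliders, hu.lastHead⟩, hγa⟩
  obtain ⟨p, hp, hpath, hpu⟩ := hu.exists_path_or_cycle
  exact h ⟨p, hp.nontrivial, hpath, hp.lastHead, hp.allColliders,
    fun z hz => DMG.mem_anSet_pair.1 (hwT z (huw (hpu.subset hz)))⟩

/-- Proposition 10: if there is no inducing path from `a`
to `b` in `G`, then `b` is μ-separated from `a` given
`D(a,b) = {γ ∈ An({a,b}) : γ directedly collider-connected to b} ∖ {a}`. -/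
theorem stmt11 {V : Type u} [Fintype V] (G : DMG V) (a b : V)
    (h : ¬ ∃ w : DMG.Walk G a b, G.IsInducingPath w) :
    DMG.muSep G {a} {b} (G.Dset a b) :=
  stmt11_general G a b h
end

section
/- Let G = (V,E) be a directed mixed graph. If the bidirected edge α↔β is in G, then α and β are potential siblings in the independence model I(G). -/
/-!
Directed mixed graphs (DMGs) with μ-separation, following
Mogensen & Hansen, "Markov equivalence of marginalized local independence graphs".
-/

universe u

namespace DMG
namespace Walk

variable {V : Type u} {G : DMG V}

/-- Append a step at the end of a walk. -/
def snoc : ∀ {x y z : V}, Walk G x y → Step G y z → Walk G x z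
  | _, _, _, .nil _, t => .cons t (.nil _)
  | _, _, _, .cons s w, t => .cons s (snoc w t)

/-- Whether the edge arriving at the endpoint has a head there, with `h` the
value for the trivial walk. -/
def lastHeadFrom : ∀ {x y : V}, Bool → Walk G x y → Bool
  | _, _, h, .nil _ => h
  | _, _, _, .cons s w => lastHeadFrom s.headEnd w

lemma lastHead_cons {x y z : V} (s : Step G x y) (w : Walk G y z) :
    (Walk.cons s w).lastHead = lastHeadFrom s.headEnd w := by
  induction w generalizing x with
  | nil => rfl
  | cons t w ih => exact ih t

lemma lastHeadFrom_snoc : ∀ {x y z : V} (h : Bool) (w : Walk G x y) (t : Step G y z),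
    lastHeadFrom h (snoc w t) = t.headEnd
  | _, _, _, _, .nil _, t => rfl
  | _, _, _, h, .cons s w, t => lastHeadFrom_snoc s.headEnd w t

lemma lastHead_snoc {x y z : V} (w : Walk G x y) (t : Step G y z) :
    (snoc w t).lastHead = t.headEnd := by
  cases w with
  | nil => rfl
  | cons s w =>
    show (Walk.cons s (snoc w t)).lastHead = t.headEnd
    rw [lastHead_cons, lastHeadFrom_snoc]

lemma openFrom_snoc {C An : Set V} :
    ∀ {x y z : V} (h : Bool) (w : Walk G x y) (t : Step G y z),
    openFrom C An h w →
    (if lastHeadFrom h w && t.headStart then y ∈ An else y ∉ C) →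
    openFrom C An h (snoc w t)
  | _, _, _, h, .nil _, t, _, hy => ⟨hy, trivial⟩
  | _, _, _, h, .cons s w, t, hw, hy =>
      ⟨hw.1, openFrom_snoc s.headEnd w t hw.2 hy⟩

end Walk

lemma muConn_snoc_bid {G : DMG V} {C : Set V} {x y z : V}
    (w : Walk G x y) (hw : w.MuConn C) (hy : y ∈ C) (e : G.bi y z) :
    (w.snoc (Step.bid e)).MuConn C := by
  cases w with
  | nil => exact hw.elim
  | cons s w =>
    obtain ⟨hx, hop, hlast⟩ := hw
    refine ⟨hx, ?_, ?_⟩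
    · refine Walk.openFrom_snoc s.headEnd w (Step.bid e) hop ?_
      rw [← Walk.lastHead_cons, hlast]
      simp only [Step.headStart, Bool.and_self, if_true]
      exact ⟨y, hy, Relation.ReflTransGen.refl⟩
    · exact Walk.lastHead_snoc (Walk.cons s w) (Step.bid e)

lemma muConn_single_bid {G : DMG V} {C : Set V} {x y : V}
    (hx : x ∉ C) (e : G.bi x y) :
    (Walk.cons (Step.bid e) (Walk.nil y) : Walk G x y).MuConn C :=
  ⟨hx, trivial, rfl⟩

end DMG

/-- Proposition 13: if the bidirected edge `a ↔ b` is in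
`G`, then `a` and `b` are potential siblings in `I(G)`. -/
theorem stmt12 {V : Type u} [Fintype V] (G : DMG V) (a b : V) (h : G.bi a b) :
    G.PotSib a b := by
  refine ⟨⟨?_, ?_⟩, ?_, ?_⟩
  · rintro ⟨C, hbC, hsep⟩
    exact hsep rfl rfl _ (DMG.muConn_single_bid hbC (G.bi_symm _ _ h))
  · rintro ⟨C, haC, hsep⟩
    exact hsep rfl rfl _ (DMG.muConn_single_bid haC h)
  · intro γ C hbC hsep x y hx hy w hw
    subst hx; subst hy
    exact hsep rfl rfl _ (DMG.muConn_snoc_bid w hw hbC (G.bi_symm _ _ h))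
  · intro γ C haC hsep x y hx hy w hw
    subst hx; subst hy
    exact hsep rfl rfl _ (DMG.muConn_snoc_bid w hw haC h)
end
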